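/- arXiv:1106.0165 — 2 statements merged into one kernel-verified Lean document; each statement's English description precedes it below -/
import Mathlib

section
/- In the setting of BEKK matrices, if the spectral radius of Σ_{i=1}^q A_i + Σ_{j=1}^p B_j is less than 1, then the spectral radius of Σ_{j=1}^p B_j is also less than 1. -/
open Matrix Kronecker

/-- Index set for the lower triangular part (including the diagonal) of a `d × d` matrix. -/
def VechIdx (d : ℕ) := {p : Fin d × Fin d // p.2 ≤ p.1}

instance (d : ℕ) : Fintype (VechIdx d) := Subtype.fintype _
instance (d : ℕ) : DecidableEq (VechIdx d) := Subtype.instDecidableEq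

/-- The `vec` of a matrix, as a vector indexed by pairs of indices. -/
def matVec {d : ℕ} (M : Matrix (Fin d) (Fin d) ℝ) : Fin d × Fin d → ℝ :=
  fun p => M p.1 p.2

/-- The `vech` of a matrix: its lower triangular part (including the diagonal). -/
def matVech {d : ℕ} (M : Matrix (Fin d) (Fin d) ℝ) : VechIdx d → ℝ :=
  fun p => M p.1.1 p.1.2

/-!
Let `T_A X = ∑ Ā X Āᵀ` and `T_B X = ∑ B̄ X B̄ᵀ`; on vech coordinates of symmetric matrices,
`∑ A_i` acts as `T_A` and `∑ B_j` as `T_B`. Both maps are monotone for the Loewner order, so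
`-Y ≤ X ≤ Y` propagates to `-(T_B + T_A)ᵏ Y ≤ T_Bᵏ X ≤ (T_B + T_A)ᵏ Y`. Every symmetric `X` lies
between `∓ c • 1`, and `ρ(∑ A_i + ∑ B_j) < 1` makes `(T_B + T_A)ᵏ (c • 1) → 0`; its diagonal
bounds the entries of `T_Bᵏ X`, hence `(∑ B_j)ᵏ → 0`, which forces `ρ(∑ B_j) < 1` by looking at
an eigenvector.
-/

open Filter Topology
open scoped MatrixOrder

section Spectral

theorem tendsto_pow_nhds_zero_of_spectralRadius_lt_one {A : Type*} [NormedRing A]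
    [NormedAlgebra ℂ A] [CompleteSpace A] {a : A} (ha : spectralRadius ℂ a < 1) :
    Tendsto (fun k : ℕ => a ^ k) atTop (𝓝 0) := by
  obtain ⟨t, hρt, ht1⟩ := ENNReal.lt_iff_exists_nnreal_btwn.mp ha
  have hbound : ∀ᶠ k : ℕ in atTop, ‖a ^ k‖ ≤ (t : ℝ) ^ k := by
    filter_upwards [(spectrum.pow_nnnorm_pow_one_div_tendsto_nhds_spectralRadius a)
      |>.eventually_lt_const hρt, eventually_ge_atTop 1] with k hk hk1
    have hk' : (k : ℝ) ≠ 0 := by positivity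
    have := ENNReal.rpow_lt_rpow hk (z := k) (by positivity)
    rw [← ENNReal.rpow_mul, one_div, inv_mul_cancel₀ hk', ENNReal.rpow_one, ENNReal.rpow_natCast,
      ← ENNReal.coe_pow, ENNReal.coe_lt_coe] at this
    exact_mod_cast this.le
  exact squeeze_zero_norm' hbound
    (tendsto_pow_atTop_nhds_zero_of_lt_one t.coe_nonneg (by exact_mod_cast ht1))

variable {ι : Type*} [Fintype ι] [DecidableEq ι]

theorem Matrix.tendsto_pow_nhds_zero_iff_forall_mem_spectrum_norm_lt_one (N : Matrix ι ι ℂ) :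
    Tendsto (fun k : ℕ => N ^ k) atTop (𝓝 0) ↔ ∀ μ ∈ spectrum ℂ N, ‖μ‖ < 1 := by
  constructor
  · intro h μ hμ
    rw [← spectrum_toLin', ← Module.End.hasEigenvalue_iff_mem_spectrum] at hμ
    obtain ⟨v, hv⟩ := hμ.exists_hasEigenvector
    have hpow : ∀ k : ℕ, N ^ k *ᵥ v = μ ^ k • v := fun k => by
      rw [← toLin'_apply, toLin'_pow, hv.pow_apply]
    have hlim : Tendsto (fun k : ℕ => ‖μ‖ ^ k * ‖v‖) atTop (𝓝 0) := by
      simpa [hpow, norm_smul] using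
        ((continuous_id.matrix_mulVec continuous_const).tendsto' 0 0 (zero_mulVec v)).comp h |>.norm
    by_contra! hμ1
    have : ‖v‖ ≤ 0 :=
      ge_of_tendsto' hlim fun k => le_mul_of_one_le_left (norm_nonneg v) (one_le_pow₀ hμ1)
    exact hv.2 (norm_le_zero_iff.mp this)
  · intro h
    cases isEmpty_or_nonempty ι
    · simp [Subsingleton.elim _ (0 : Matrix ι ι ℂ)]
    -- any Banach algebra norm will do: its topology is the entrywise one
    let _ := Matrix.linftyOpNormedRing (n := ι) (α := ℂ)
    let _ := Matrix.linftyOpNormedAlgebra (n := ι) (R := ℂ) (α := ℂ)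
    exact tendsto_pow_nhds_zero_of_spectralRadius_lt_one <| by
      simpa using spectrum.spectralRadius_lt_of_forall_lt N (r := 1) fun z hz => mod_cast h z hz

theorem Matrix.tendsto_pow_map_ofReal_iff (M : Matrix ι ι ℝ) :
    Tendsto (fun k : ℕ => M.map Complex.ofReal ^ k) atTop (𝓝 0) ↔
      Tendsto (fun k : ℕ => M ^ k) atTop (𝓝 0) := by
  have hpow : ∀ k : ℕ, M.map Complex.ofReal ^ k = (M ^ k).map Complex.ofReal := fun k =>
    (map_pow Complex.ofRealHom.mapMatrix M k).symm
  simp only [hpow]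
  constructor
  · intro h
    simpa [Function.comp_def, Matrix.map_map] using
      ((continuous_id.matrix_map Complex.continuous_re).tendsto 0).comp h
  · intro h
    simpa [Function.comp_def] using
      ((continuous_id.matrix_map Complex.continuous_ofReal).tendsto 0).comp h

end Spectral

theorem Matrix.tendsto_nhds_zero_iff_forall_tendsto_mulVec {α R m n : Type*} [Fintype n]
    [DecidableEq n] [Semiring R] [TopologicalSpace R] [IsTopologicalSemiring R]
    {f : α → Matrix m n R} {l : Filter α} :
    Tendsto f l (𝓝 0) ↔ ∀ w : n → R, Tendsto (fun a => f a *ᵥ w) l (𝓝 0) := by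
  constructor
  · intro h w
    exact ((continuous_id.matrix_mulVec continuous_const).tendsto' 0 0 (zero_mulVec w)).comp h
  · intro h
    refine tendsto_pi_nhds.2 fun i => tendsto_pi_nhds.2 fun j => ?_
    simpa [mulVec_single_one] using (tendsto_pi_nhds.mp (h (Pi.single j 1))) i

section Loewner

variable {n : Type*}

theorem Matrix.nonneg_of_neg_le_self {Y : Matrix n n ℝ} (h : -Y ≤ Y) : 0 ≤ Y := by
  have h2 := le_iff.mp h
  rw [sub_neg_eq_add, ← two_smul ℝ] at h2
  have := h2.smul (show (0 : ℝ) ≤ 1 / 2 by norm_num)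
  rw [smul_smul] at this
  norm_num at this
  exact nonneg_iff_posSemidef.mpr this

variable [Fintype n] [DecidableEq n]

theorem Matrix.IsSymm.exists_neg_algebraMap_le_and_le_algebraMap {X : Matrix n n ℝ}
    (hX : X.IsSymm) : ∃ c : ℝ, -algebraMap ℝ _ c ≤ X ∧ X ≤ algebraMap ℝ _ c := by
  obtain ⟨r, hr⟩ := (finite_real_spectrum (A := X)).isBounded.subset_closedBall 0
  have hr' : ∀ x ∈ spectrum ℝ X, |x| ≤ r := fun x hx => by simpa using hr hx
  refine ⟨r, ?_, le_algebraMap_of_spectrum_le (fun x hx => (le_abs_self x).trans (hr' x hx)) hX⟩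
  rw [← map_neg]
  exact algebraMap_le_of_le_spectrum (fun x hx => neg_le_of_abs_le (hr' x hx)) hX

theorem Matrix.abs_apply_le_of_neg_le_of_le {Z W : Matrix n n ℝ} (h₁ : -W ≤ Z) (h₂ : Z ≤ W)
    (i j : n) : |Z i j| ≤ (W i i + W j j) / 2 := by
  rw [le_iff, sub_neg_eq_add] at h₁
  rw [le_iff] at h₂
  have quad : ∀ (M : Matrix n n ℝ) (s : ℝ),
      (Pi.single i 1 + s • Pi.single j 1) ⬝ᵥ M *ᵥ (Pi.single i 1 + s • Pi.single j 1) =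
        M i i + s * (M i j + M j i) + s ^ 2 * M j j := by
    intro M s
    simp [mulVec_add, dotProduct_add, add_dotProduct, mulVec_smul, dotProduct_smul,
      smul_dotProduct]
    ring
  have h₁p := h₁.dotProduct_mulVec_nonneg (Pi.single i 1 + (1 : ℝ) • Pi.single j 1)
  have h₁m := h₁.dotProduct_mulVec_nonneg (Pi.single i 1 + (-1 : ℝ) • Pi.single j 1)
  have h₂p := h₂.dotProduct_mulVec_nonneg (Pi.single i 1 + (1 : ℝ) • Pi.single j 1)
  have h₂m := h₂.dotProduct_mulVec_nonneg (Pi.single i 1 + (-1 : ℝ) • Pi.single j 1)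
  simp only [star_trivial, quad, add_apply, sub_apply] at h₁p h₁m h₂p h₂m
  have hZ : Z j i = Z i j := by
    have e₁ := h₁.isHermitian.apply i j
    have e₂ := h₂.isHermitian.apply i j
    simp only [star_trivial, add_apply, sub_apply] at e₁ e₂
    linarith
  rw [abs_le]
  constructor <;> linarith

end Loewner

section Domination

variable {n : Type*} {P Q : Module.End ℝ (Matrix n n ℝ)}

theorem Monotone.neg_pow_add_apply_le_and_pow_apply_le (hP : Monotone P) (hQ : Monotone Q)
    (k : ℕ) {X Y : Matrix n n ℝ} (h₁ : -Y ≤ X) (h₂ : X ≤ Y) :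
    -(((P + Q) ^ k) Y) ≤ (P ^ k) X ∧ (P ^ k) X ≤ ((P + Q) ^ k) Y := by
  induction k generalizing X Y with
  | zero => exact ⟨h₁, h₂⟩
  | succ k ih =>
    have hQY : 0 ≤ Q Y := by simpa using hQ (nonneg_of_neg_le_self (h₁.trans h₂))
    rw [pow_succ, pow_succ, Module.End.mul_apply, Module.End.mul_apply]
    refine ih ?_ ?_
    · rw [LinearMap.add_apply, neg_add]
      calc -P Y + -Q Y ≤ -P Y := by simpa using hQY
        _ = P (-Y) := (map_neg P Y).symm
        _ ≤ P X := hP h₁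
    · exact (hP h₂).trans (le_add_of_nonneg_right hQY)

/-- `Pᵏ X` is squeezed between `∓ (P + Q)ᵏ (c • 1)`, whose diagonal bounds its entries. -/
theorem Monotone.tendsto_pow_apply_nhds_zero_of_add [Fintype n] [DecidableEq n]
    (hP : Monotone P) (hQ : Monotone Q)
    (h : ∀ Y, 0 ≤ Y → Tendsto (fun k : ℕ => ((P + Q) ^ k) Y) atTop (𝓝 0))
    {X : Matrix n n ℝ} (hX : X.IsSymm) :
    Tendsto (fun k : ℕ => (P ^ k) X) atTop (𝓝 0) := by
  obtain ⟨c, h₁, h₂⟩ := hX.exists_neg_algebraMap_le_and_le_algebraMap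
  have hdiag : ∀ m : n,
      Tendsto (fun k : ℕ => ((P + Q) ^ k) (algebraMap ℝ _ c) m m) atTop (𝓝 0) := fun m =>
    tendsto_pi_nhds.1 (tendsto_pi_nhds.1 (h _ (nonneg_of_neg_le_self (h₁.trans h₂))) m) m
  refine tendsto_pi_nhds.2 fun i => tendsto_pi_nhds.2 fun j => ?_
  refine squeeze_zero_norm (fun k => ?_) (by simpa using ((hdiag i).add (hdiag j)).div_const 2)
  obtain ⟨hl, hu⟩ := hP.neg_pow_add_apply_le_and_pow_apply_le hQ k h₁ h₂
  exact abs_apply_le_of_neg_le_of_le hl hu i j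

end Domination

section Kraus

variable {n ι : Type*} [Fintype n] [Fintype ι]

def krausMap (G : ι → Matrix n n ℝ) : Module.End ℝ (Matrix n n ℝ) :=
  ∑ k, LinearMap.mulLeftRight ℝ (G k, (G k)ᵀ)

theorem krausMap_apply (G : ι → Matrix n n ℝ) (X : Matrix n n ℝ) :
    krausMap G X = ∑ k, G k * X * (G k)ᵀ := by
  simp [krausMap]

theorem Matrix.IsSymm.krausMap (G : ι → Matrix n n ℝ) {X : Matrix n n ℝ} (hX : X.IsSymm) :
    (_root_.krausMap G X).IsSymm := by
  simp [IsSymm, krausMap_apply, transpose_sum, Matrix.mul_assoc, hX.eq]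

theorem krausMap_monotone (G : ι → Matrix n n ℝ) : Monotone (krausMap G) := by
  intro X Y h
  rw [le_iff, ← map_sub, krausMap_apply]
  exact posSemidef_sum _ fun k _ => by
    simpa using (le_iff.mp h).mul_mul_conjTranspose_same (G k)

end Kraus

section Vech

variable {d : ℕ}

theorem matVec_eq_vec_transpose (X : Matrix (Fin d) (Fin d) ℝ) : matVec X = vec Xᵀ := rfl

theorem kronecker_mulVec_matVec (G X : Matrix (Fin d) (Fin d) ℝ) :
    (G ⊗ₖ G) *ᵥ matVec X = matVec (G * X * Gᵀ) := by
  simp [matVec_eq_vec_transpose, kronecker_mulVec_vec, transpose_mul, Matrix.mul_assoc]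

theorem sum_kronecker_mulVec_matVec {ι : Type*} [Fintype ι]
    (G : ι → Matrix (Fin d) (Fin d) ℝ) (X : Matrix (Fin d) (Fin d) ℝ) :
    (∑ k, G k ⊗ₖ G k) *ᵥ matVec X = matVec (krausMap G X) := by
  rw [sum_mulVec, krausMap_apply]
  simp only [kronecker_mulVec_matVec]
  ext p
  simp [matVec, Matrix.sum_apply]

theorem exists_isSymm_matVech_eq (w : VechIdx d → ℝ) :
    ∃ X : Matrix (Fin d) (Fin d) ℝ, X.IsSymm ∧ matVech X = w := by
  refine ⟨of fun i j => w ⟨(max i j, min i j), min_le_max⟩, ?_, ?_⟩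
  · ext i j
    simp [max_comm, min_comm]
  · ext ⟨⟨i, j⟩, hji⟩
    simp [matVech, hji]

theorem continuous_matVech :
    Continuous (matVech : Matrix (Fin d) (Fin d) ℝ → VechIdx d → ℝ) :=
  continuous_pi fun p => continuous_apply_apply p.1.1 p.1.2

theorem tendsto_nhds_zero_of_tendsto_matVec {α : Type*} {l : Filter α}
    {f : α → Matrix (Fin d) (Fin d) ℝ} (h : Tendsto (fun a => matVec (f a)) l (𝓝 0)) :
    Tendsto f l (𝓝 0) :=
  tendsto_pi_nhds.2 fun i => tendsto_pi_nhds.2 fun j => tendsto_pi_nhds.1 h (i, j)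

theorem pow_mulVec_matVech {M : Matrix (VechIdx d) (VechIdx d) ℝ}
    {T : Module.End ℝ (Matrix (Fin d) (Fin d) ℝ)} (hT : ∀ X, X.IsSymm → (T X).IsSymm)
    (hM : ∀ X, X.IsSymm → M *ᵥ matVech X = matVech (T X)) (k : ℕ)
    {X : Matrix (Fin d) (Fin d) ℝ} (hX : X.IsSymm) :
    (M ^ k) *ᵥ matVech X = matVech ((T ^ k) X) ∧ ((T ^ k) X).IsSymm := by
  induction k generalizing X with
  | zero => simp [hX]
  | succ k ih =>
    rw [pow_succ, pow_succ, ← mulVec_mulVec, Module.End.mul_apply, hM X hX]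
    exact ih (hT X hX)

theorem tendsto_pow_nhds_zero_iff_forall_isSymm {K : Matrix (VechIdx d) (Fin d × Fin d) ℝ}
    (hK : ∀ D : Matrix (Fin d) (Fin d) ℝ, D.IsSymm → matVec D = Kᵀ *ᵥ matVech D)
    {M : Matrix (VechIdx d) (VechIdx d) ℝ} {T : Module.End ℝ (Matrix (Fin d) (Fin d) ℝ)}
    (hT : ∀ X, X.IsSymm → (T X).IsSymm)
    (hM : ∀ X, X.IsSymm → M *ᵥ matVech X = matVech (T X)) :
    Tendsto (fun k : ℕ => M ^ k) atTop (𝓝 0) ↔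
      ∀ X, X.IsSymm → Tendsto (fun k : ℕ => (T ^ k) X) atTop (𝓝 0) := by
  rw [tendsto_nhds_zero_iff_forall_tendsto_mulVec]
  constructor
  · intro h X hX
    refine tendsto_nhds_zero_of_tendsto_matVec ?_
    have hmatVec : ∀ k : ℕ, matVec ((T ^ k) X) = Kᵀ *ᵥ ((M ^ k) *ᵥ matVech X) := fun k => by
      obtain ⟨hk, hks⟩ := pow_mulVec_matVech hT hM k hX
      rw [hk, hK _ hks]
    simp only [hmatVec]
    exact ((continuous_const.matrix_mulVec continuous_id).tendsto' 0 0 (mulVec_zero _)).comp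
      (h (matVech X))
  · intro h w
    obtain ⟨X, hX, rfl⟩ := exists_isSymm_matVech_eq w
    simp only [(pow_mulVec_matVech hT hM _ hX).1]
    exact (continuous_matVech.tendsto' 0 0 rfl).comp (h X hX)

theorem mulVec_matVech_krausMap {H K : Matrix (VechIdx d) (Fin d × Fin d) ℝ}
    (hH : ∀ D : Matrix (Fin d) (Fin d) ℝ, D.IsSymm → matVech D = H *ᵥ matVec D)
    (hK : ∀ D : Matrix (Fin d) (Fin d) ℝ, D.IsSymm → matVec D = Kᵀ *ᵥ matVech D)
    {ι : Type*} [Fintype ι] (G : ι → Matrix (Fin d) (Fin d) ℝ) {X : Matrix (Fin d) (Fin d) ℝ}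
    (hX : X.IsSymm) :
    (H * (∑ k, G k ⊗ₖ G k) * Kᵀ) *ᵥ matVech X = matVech (krausMap G X) := by
  rw [← mulVec_mulVec, ← mulVec_mulVec, ← hK X hX, sum_kronecker_mulVec_matVec,
    hH _ (hX.krausMap G)]

theorem sum_mulVec_matVech_krausMap {H K : Matrix (VechIdx d) (Fin d × Fin d) ℝ}
    (hH : ∀ D : Matrix (Fin d) (Fin d) ℝ, D.IsSymm → matVech D = H *ᵥ matVec D)
    (hK : ∀ D : Matrix (Fin d) (Fin d) ℝ, D.IsSymm → matVec D = Kᵀ *ᵥ matVech D)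
    {ι : Type*} [Fintype ι] {κ : ι → Type*} [∀ i, Fintype (κ i)]
    (G : (i : ι) → κ i → Matrix (Fin d) (Fin d) ℝ) {X : Matrix (Fin d) (Fin d) ℝ}
    (hX : X.IsSymm) :
    (∑ i, H * (∑ k, G i k ⊗ₖ G i k) * Kᵀ) *ᵥ matVech X =
      matVech (krausMap (fun x : Σ i, κ i => G x.1 x.2) X) := by
  rw [← mulVec_matVech_krausMap hH hK _ hX, Fintype.sum_sigma, Matrix.mul_sum, Matrix.sum_mul]

end Vech

theorem bekk_spectral_radius_B_lt_one_general {d p q : ℕ}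
    (l : Fin q → ℕ) (s : Fin p → ℕ)
    (Abar : (i : Fin q) → Fin (l i) → Matrix (Fin d) (Fin d) ℝ)
    (Bbar : (j : Fin p) → Fin (s j) → Matrix (Fin d) (Fin d) ℝ)
    (H K : Matrix (VechIdx d) (Fin d × Fin d) ℝ)
    (hHK : ∀ D : Matrix (Fin d) (Fin d) ℝ, Dᵀ = D →
      matVech D = H.mulVec (matVec D) ∧ matVec D = Kᵀ.mulVec (matVech D))
    (A : Fin q → Matrix (VechIdx d) (VechIdx d) ℝ)
    (B : Fin p → Matrix (VechIdx d) (VechIdx d) ℝ)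
    (hA : ∀ i, A i = H * (∑ k, Abar i k ⊗ₖ Abar i k) * Kᵀ)
    (hB : ∀ j, B j = H * (∑ r, Bbar j r ⊗ₖ Bbar j r) * Kᵀ)
    (hspec : ∀ μ ∈ spectrum ℂ ((∑ i, A i + ∑ j, B j).map Complex.ofReal), ‖μ‖ < 1) :
    ∀ μ ∈ spectrum ℂ ((∑ j, B j).map Complex.ofReal), ‖μ‖ < 1 := by
  have hH : ∀ D : Matrix (Fin d) (Fin d) ℝ, D.IsSymm → matVech D = H *ᵥ matVec D :=
    fun D hD => (hHK D hD).1
  have hK : ∀ D : Matrix (Fin d) (Fin d) ℝ, D.IsSymm → matVec D = Kᵀ *ᵥ matVech D :=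
    fun D hD => (hHK D hD).2
  set TA := krausMap fun x : (Σ i, Fin (l i)) => Abar x.1 x.2
  set TB := krausMap fun x : (Σ j, Fin (s j)) => Bbar x.1 x.2
  have hA_vech : ∀ X, X.IsSymm → (∑ i, A i) *ᵥ matVech X = matVech (TA X) := fun X hX => by
    simpa only [hA] using sum_mulVec_matVech_krausMap hH hK Abar hX
  have hB_vech : ∀ X, X.IsSymm → (∑ j, B j) *ᵥ matVech X = matVech (TB X) := fun X hX => by
    simpa only [hB] using sum_mulVec_matVech_krausMap hH hK Bbar hX
  have hS_vech : ∀ X, X.IsSymm →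
      (∑ i, A i + ∑ j, B j) *ᵥ matVech X = matVech ((TB + TA) X) := fun X hX => by
    rw [add_mulVec, hA_vech X hX, hB_vech X hX, add_comm]
    rfl
  rw [← tendsto_pow_nhds_zero_iff_forall_mem_spectrum_norm_lt_one,
    tendsto_pow_map_ofReal_iff] at hspec ⊢
  rw [tendsto_pow_nhds_zero_iff_forall_isSymm hK
    (fun X hX => (hX.krausMap _).add (hX.krausMap _)) hS_vech] at hspec
  rw [tendsto_pow_nhds_zero_iff_forall_isSymm hK (fun X hX => hX.krausMap _) hB_vech]
  exact fun X hX => (krausMap_monotone _).tendsto_pow_apply_nhds_zero_of_add (krausMap_monotone _)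
    (fun Y hY => hspec Y (nonneg_iff_posSemidef.mp hY).isHermitian) hX

/-- In the BEKK setting, if the spectral radius of `∑ A_i + ∑ B_j` is `< 1`, then the
spectral radius of `∑ B_j` is also `< 1`. -/
theorem bekk_spectral_radius_B_lt_one {d p q : ℕ}
    (l : Fin q → ℕ) (s : Fin p → ℕ)
    (Abar : (i : Fin q) → Fin (l i) → Matrix (Fin d) (Fin d) ℝ)
    (Bbar : (j : Fin p) → Fin (s j) → Matrix (Fin d) (Fin d) ℝ)
    (H K : Matrix (VechIdx d) (Fin d × Fin d) ℝ)
    (hHK : ∀ D : Matrix (Fin d) (Fin d) ℝ, Dᵀ = D →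
      matVech D = H.mulVec (matVec D) ∧ matVec D = Kᵀ.mulVec (matVech D))
    (hI : H * Kᵀ = 1)
    (A : Fin q → Matrix (VechIdx d) (VechIdx d) ℝ)
    (B : Fin p → Matrix (VechIdx d) (VechIdx d) ℝ)
    (hA : ∀ i, A i = H * (∑ k, Abar i k ⊗ₖ Abar i k) * Kᵀ)
    (hB : ∀ j, B j = H * (∑ r, Bbar j r ⊗ₖ Bbar j r) * Kᵀ)
    (hspec : ∀ μ ∈ spectrum ℂ ((∑ i, A i + ∑ j, B j).map Complex.ofReal), ‖μ‖ < 1) :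
    ∀ μ ∈ spectrum ℂ ((∑ j, B j).map Complex.ofReal), ‖μ‖ < 1 :=
  bekk_spectral_radius_B_lt_one_general l s Abar Bbar H K hHK A B hA hB hspec
end

section
/- Let B_1,...,B_p be n×n real matrices (n = d(d+1)/2) arising as B_j = H_d(Σ_r B̄_{j,r} ⊗ B̄_{j,r})K_dᵗ, and let B be the block companion matrix with first block row (B_1 B_2 ... B_p), identity blocks on the subdiagonal, and zeros elsewhere. If the spectral radius of Σ_{j=1}^p B_j is less than 1, then the spectral radius of the companion matrix B is less than 1. -/
open Matrix Kronecker

/-!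
Suppose the companion matrix had an eigenvalue `μ` with `1 ≤ ‖μ‖`. Its eigenvector has the
form `(v, μ⁻¹ v, …, μ⁻⁽ᵖ⁻¹⁾ v)` with `v = ∑ⱼ μ⁻⁽ʲ⁺¹⁾ Bⱼ v`. On `vech` of symmetric matrices `Bⱼ`
acts as `Φⱼ V = ∑ᵣ B̄ⱼᵣ V B̄ⱼᵣᵀ`, so the symmetric `V` with `vech V = v` satisfies
`V = ∑ⱼ cⱼ Φⱼ V` with `‖cⱼ‖ ≤ 1`. The maps `Φⱼ` preserve the domination
`2 ‖x* V y‖ ≤ x* T x + y* T y`, hence `V` is dominated by every iterate `Ψᵏ (α I)` of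
`Ψ = ∑ⱼ Φⱼ`. These iterates tend to `0`, because `Ψ` acts on `vech` as `∑ⱼ Bⱼ`, whose spectral
radius is `< 1` (Gelfand's formula). So `V = 0`, hence `v = 0`, a contradiction.
-/

open Filter Topology Complex

theorem tendsto_pow_atTop_nhds_zero_of_norm_spectrum_lt_one {A : Type*} [NormedRing A]
    [NormedAlgebra ℂ A] [CompleteSpace A] {a : A} (h : ∀ μ ∈ spectrum ℂ a, ‖μ‖ < 1) :
    Tendsto (a ^ ·) atTop (𝓝 0) := by
  rcases subsingleton_or_nontrivial A with hA | hA
  · exact tendsto_const_nhds.congr fun _ => Subsingleton.elim _ _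
  have hρ : spectralRadius ℂ a < 1 := by
    simpa using spectrum.spectralRadius_lt_of_forall_lt (r := 1) a fun μ hμ => by
      exact_mod_cast h μ hμ
  obtain ⟨r, hρr, hr1⟩ := ENNReal.lt_iff_exists_nnreal_btwn.mp hρ
  have hbound : ∀ᶠ k : ℕ in atTop, ‖a ^ k‖ ≤ (r : ℝ) ^ k := by
    filter_upwards [(spectrum.pow_nnnorm_pow_one_div_tendsto_nhds_spectralRadius a).eventually
      (gt_mem_nhds hρr), eventually_ge_atTop 1] with k hk hk1
    rw [one_div, ENNReal.rpow_inv_lt_iff (Nat.cast_pos.mpr hk1), ENNReal.rpow_natCast,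
      ← ENNReal.coe_pow, ENNReal.coe_lt_coe] at hk
    exact_mod_cast hk.le
  exact tendsto_zero_iff_norm_tendsto_zero.mpr <|
    squeeze_zero' (Eventually.of_forall fun _ => norm_nonneg _) hbound
      (tendsto_pow_atTop_nhds_zero_of_lt_one r.2 (by exact_mod_cast hr1))

namespace Matrix

theorem exists_mulVec_eq_smul_of_mem_spectrum {K n : Type*} [Field K] [Fintype n] [DecidableEq n]
    {M : Matrix n n K} {μ : K} (hμ : μ ∈ spectrum K M) : ∃ x ≠ 0, M *ᵥ x = μ • x := by
  rw [← spectrum_toLin', ← Module.End.hasEigenvalue_iff_mem_spectrum] at hμ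
  obtain ⟨x, hx⟩ := hμ.exists_hasEigenvector
  exact ⟨x, hx.2, by simpa using hx.apply_eq_smul⟩

theorem isSymm_sum {R n ι : Type*} [AddCommMonoid R] {s : Finset ι} {M : ι → Matrix n n R}
    (h : ∀ i ∈ s, (M i).IsSymm) : (∑ i ∈ s, M i).IsSymm := by
  rw [IsSymm, transpose_sum]
  exact Finset.sum_congr rfl fun i hi => h i hi

theorem map_ofReal_mul {l m n : Type*} [Fintype m] (M : Matrix l m ℝ) (N : Matrix m n ℝ) :
    (M * N).map ofReal = M.map ofReal * N.map ofReal :=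
  Matrix.map_mul (f := ofRealHom)

theorem map_ofReal_sum {m n ι : Type*} (s : Finset ι) (M : ι → Matrix m n ℝ) :
    (∑ i ∈ s, M i).map ofReal = ∑ i ∈ s, (M i).map ofReal := by
  ext
  simp [Matrix.sum_apply]

theorem conjTranspose_map_ofReal {m n : Type*} (A : Matrix m n ℝ) :
    (A.map ofReal)ᴴ = (A.map ofReal)ᵀ := by
  ext i j
  simp

theorem map_ofReal_mulVec_eq {m n : Type*} [Fintype n] (M : Matrix m n ℝ) {u : n → ℂ}
    {v : m → ℂ} (hre : M *ᵥ (re ∘ u) = re ∘ v) (him : M *ᵥ (im ∘ u) = im ∘ v) :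
    M.map ofReal *ᵥ u = v := by
  funext i
  apply Complex.ext
  · simpa [mulVec, dotProduct, Complex.re_sum] using congrFun hre i
  · simpa [mulVec, dotProduct, Complex.im_sum] using congrFun him i

section Vech

variable {R : Type*} {d : ℕ}

def vech (M : Matrix (Fin d) (Fin d) R) : VechIdx d → R :=
  fun q => M q.1.1 q.1.2

def ofVech (u : VechIdx d → R) : Matrix (Fin d) (Fin d) R :=
  of fun i j => if h : j ≤ i then u ⟨(i, j), h⟩ else u ⟨(j, i), le_of_not_ge h⟩

theorem vech_ofVech (u : VechIdx d → R) : vech (ofVech u) = u := by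
  funext ⟨⟨i, j⟩, hij⟩
  simp [vech, ofVech, hij]

theorem isSymm_ofVech (u : VechIdx d → R) : (ofVech u).IsSymm := by
  refine IsSymm.ext fun i j => ?_
  rcases lt_trichotomy i j with h | rfl | h
  · simp [ofVech, h.le, not_le.mpr h]
  · rfl
  · simp [ofVech, h.le, not_le.mpr h]

theorem IsSymm.ofVech_vech {M : Matrix (Fin d) (Fin d) R} (hM : M.IsSymm) :
    ofVech (vech M) = M := by
  ext i j
  by_cases h : j ≤ i
  · simp [ofVech, vech, h]
  · simp [ofVech, vech, h, hM.apply i j]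

theorem IsSymm.ext_of_vech {M N : Matrix (Fin d) (Fin d) R} (hM : M.IsSymm) (hN : N.IsSymm)
    (h : vech M = vech N) : M = N := by
  rw [← hM.ofVech_vech, ← hN.ofVech_vech, h]

theorem vech_sum [AddCommMonoid R] {ι : Type*} (s : Finset ι) (M : ι → Matrix (Fin d) (Fin d) R) :
    vech (∑ i ∈ s, M i) = ∑ i ∈ s, vech (M i) := by
  funext q
  simp [vech, Matrix.sum_apply]

theorem vech_smul [Mul R] (c : R) (M : Matrix (Fin d) (Fin d) R) : vech (c • M) = c • vech M :=
  rfl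

theorem ofVech_zero [Zero R] : ofVech (0 : VechIdx d → R) = 0 := by
  ext i j
  by_cases h : j ≤ i <;> simp [ofVech, h] <;> rfl

theorem continuous_ofVech [TopologicalSpace R] : Continuous (ofVech : (VechIdx d → R) → _) :=
  continuous_pi fun i => continuous_pi fun j => by
    by_cases h : j ≤ i
    · simpa [ofVech, h] using continuous_apply _
    · simpa [ofVech, h] using continuous_apply _

theorem sum_mulVec_vech [NonUnitalNonAssocSemiring R] {β : Type*} (s : Finset β)
    {M : β → Matrix (VechIdx d) (VechIdx d) R}
    {Φ : β → Matrix (Fin d) (Fin d) R → Matrix (Fin d) (Fin d) R}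
    (hM : ∀ b V, V.IsSymm → M b *ᵥ vech V = vech (Φ b V)) {V : Matrix (Fin d) (Fin d) R}
    (hV : V.IsSymm) : (∑ b ∈ s, M b) *ᵥ vech V = vech (∑ b ∈ s, Φ b V) := by
  rw [sum_mulVec, vech_sum]
  exact Finset.sum_congr rfl fun b _ => hM b V hV

theorem ofVech_eq_sum_smul {R : Type*} [CommSemiring R] {β : Type*} [Fintype β]
    {M : β → Matrix (VechIdx d) (VechIdx d) R}
    {Φ : β → Matrix (Fin d) (Fin d) R → Matrix (Fin d) (Fin d) R}
    (hΦ : ∀ b V, V.IsSymm → (Φ b V).IsSymm) (hM : ∀ b V, V.IsSymm → M b *ᵥ vech V = vech (Φ b V))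
    {c : β → R} {v : VechIdx d → R} (hv : v = ∑ b, c b • (M b *ᵥ v)) :
    ofVech v = ∑ b, c b • Φ b (ofVech v) := by
  refine (isSymm_ofVech v).ext_of_vech
    (isSymm_sum fun b _ => (hΦ b _ (isSymm_ofVech v)).smul (c b)) ?_
  rw [vech_sum, vech_ofVech]
  conv_lhs => rw [hv]
  simp only [vech_smul, ← hM _ _ (isSymm_ofVech v), vech_ofVech]

theorem tendsto_iterate_nhds_zero_of_mulVec_vech
    {Ψ : Matrix (Fin d) (Fin d) ℂ → Matrix (Fin d) (Fin d) ℂ}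
    {S : Matrix (VechIdx d) (VechIdx d) ℂ} (hΨ : ∀ V, V.IsSymm → (Ψ V).IsSymm)
    (hS : ∀ V, V.IsSymm → S *ᵥ vech V = vech (Ψ V)) (hpow : Tendsto (S ^ ·) atTop (𝓝 0))
    {T : Matrix (Fin d) (Fin d) ℂ} (hT : T.IsSymm) : Tendsto (fun k => Ψ^[k] T) atTop (𝓝 0) := by
  have hsymm : ∀ k, (Ψ^[k] T).IsSymm := by
    intro k
    induction k with
    | zero => exact hT
    | succ k ih => rw [Function.iterate_succ_apply']; exact hΨ _ ih
  have hvech : ∀ k, vech (Ψ^[k] T) = S ^ k *ᵥ vech T := by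
    intro k
    induction k with
    | zero => simp
    | succ k ih =>
      rw [Function.iterate_succ_apply', ← hS _ (hsymm k), ih, mulVec_mulVec, pow_succ']
  have hlim : Tendsto (fun k => ofVech (S ^ k *ᵥ vech T)) atTop
      (𝓝 (ofVech ((0 : Matrix (VechIdx d) (VechIdx d) ℂ) *ᵥ vech T))) :=
    ((continuous_ofVech.comp (continuous_id.matrix_mulVec continuous_const)).tendsto 0).comp hpow
  rw [zero_mulVec, ofVech_zero] at hlim
  refine hlim.congr fun k => ?_
  rw [← hvech, (hsymm k).ofVech_vech]

end Vech

variable {d : ℕ}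

theorem matVec_eq_vec {M : Matrix (Fin d) (Fin d) ℝ} (hM : M.IsSymm) : matVec M = vec M :=
  funext fun q => (hM.apply q.1 q.2).symm

theorem vech_eq_map_ofReal_mulVec_vec {H : Matrix (VechIdx d) (Fin d × Fin d) ℝ}
    (hH : ∀ D : Matrix (Fin d) (Fin d) ℝ, Dᵀ = D → matVech D = H *ᵥ matVec D)
    {D : Matrix (Fin d) (Fin d) ℂ} (hD : D.IsSymm) : vech D = H.map ofReal *ᵥ vec D := by
  refine (map_ofReal_mulVec_eq H ?_ ?_).symm
  · rw [← vec_map, ← matVec_eq_vec (hD.map re)]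
    exact (hH _ (hD.map re)).symm
  · rw [← vec_map, ← matVec_eq_vec (hD.map im)]
    exact (hH _ (hD.map im)).symm

theorem vec_eq_map_ofReal_mulVec_vech {K : Matrix (VechIdx d) (Fin d × Fin d) ℝ}
    (hK : ∀ D : Matrix (Fin d) (Fin d) ℝ, Dᵀ = D → matVec D = Kᵀ *ᵥ matVech D)
    {D : Matrix (Fin d) (Fin d) ℂ} (hD : D.IsSymm) : vec D = Kᵀ.map ofReal *ᵥ vech D := by
  refine (map_ofReal_mulVec_eq Kᵀ ?_ ?_).symm
  · rw [← vec_map, ← matVec_eq_vec (hD.map re)]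
    exact (hK _ (hD.map re)).symm
  · rw [← vec_map, ← matVec_eq_vec (hD.map im)]
    exact (hK _ (hD.map im)).symm

def conjSum {ι n R : Type*} [Fintype ι] [Fintype n] [Semiring R] [StarRing R]
    (A : ι → Matrix n n R) (V : Matrix n n R) : Matrix n n R :=
  ∑ i, A i * V * (A i)ᴴ

theorem IsSymm.conjSum_map_ofReal {ι n : Type*} [Fintype ι] [Fintype n]
    (A : ι → Matrix n n ℝ) {V : Matrix n n ℂ} (hV : V.IsSymm) :
    (conjSum (fun i => (A i).map ofReal) V).IsSymm := by
  simp only [IsSymm, conjSum, conjTranspose_map_ofReal, transpose_sum, transpose_mul,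
    transpose_transpose, hV.eq, Matrix.mul_assoc]

theorem map_ofReal_mulVec_vech_conjSum {H K : Matrix (VechIdx d) (Fin d × Fin d) ℝ}
    (hH : ∀ D : Matrix (Fin d) (Fin d) ℝ, Dᵀ = D → matVech D = H *ᵥ matVec D)
    (hK : ∀ D : Matrix (Fin d) (Fin d) ℝ, Dᵀ = D → matVec D = Kᵀ *ᵥ matVech D)
    {ι : Type*} [Fintype ι] (A : ι → Matrix (Fin d) (Fin d) ℝ)
    {V : Matrix (Fin d) (Fin d) ℂ} (hV : V.IsSymm) :
    (H * (∑ r, A r ⊗ₖ A r) * Kᵀ).map ofReal *ᵥ vech V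
      = vech (conjSum (fun r => (A r).map ofReal) V) := by
  have hkron : (∑ r, A r ⊗ₖ A r).map ofReal *ᵥ vec V
      = vec (conjSum (fun r => (A r).map ofReal) V) := by
    simp only [conjSum, conjTranspose_map_ofReal, vec_sum, ← kronecker_mulVec_vec, ← sum_mulVec]
    congr 1
    ext i j
    simp [Matrix.sum_apply, kroneckerMap_apply]
  rw [map_ofReal_mul, map_ofReal_mul, ← mulVec_mulVec, ← mulVec_mulVec,
    ← vec_eq_map_ofReal_mulVec_vech hK hV, hkron,
    vech_eq_map_ofReal_mulVec_vec hH (hV.conjSum_map_ofReal A)]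

section Domination

variable {m n : Type*} [Fintype m] [Fintype n]

/-- For Hermitian `T` this says that the block matrix `!![T, V; Vᴴ, T]` is positive
semidefinite. -/
def DominatedBy (V T : Matrix n n ℂ) : Prop :=
  ∀ x y : n → ℂ, 2 * ‖star x ⬝ᵥ V *ᵥ y‖ ≤ (star x ⬝ᵥ T *ᵥ x).re + (star y ⬝ᵥ T *ᵥ y).re

theorem dominatedBy_smul_one [DecidableEq n] (V : Matrix n n ℂ) :
    DominatedBy V (((∑ i, ∑ j, ‖V i j‖ : ℝ) : ℂ) • 1) := by
  intro x y
  have hform : ∀ z : n → ℂ,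
      (star z ⬝ᵥ (((∑ i, ∑ j, ‖V i j‖ : ℝ) : ℂ) • (1 : Matrix n n ℂ)) *ᵥ z).re
        = (∑ i, ∑ j, ‖V i j‖) * ∑ k, ‖z k‖ ^ 2 := by
    intro z
    simp only [smul_mulVec, one_mulVec, dotProduct_smul, smul_eq_mul, Complex.re_ofReal_mul]
    simp [dotProduct, Complex.re_sum, ← Complex.normSq_eq_norm_sq, Complex.normSq_apply]
  have hentry : ∀ i j, 2 * (‖x i‖ * ‖V i j‖ * ‖y j‖)
      ≤ ‖V i j‖ * (∑ k, ‖x k‖ ^ 2 + ∑ k, ‖y k‖ ^ 2) := fun i j => by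
    have hx := Finset.single_le_sum (f := fun k => ‖x k‖ ^ 2) (fun _ _ => by positivity)
      (Finset.mem_univ i)
    have hy := Finset.single_le_sum (f := fun k => ‖y k‖ ^ 2) (fun _ _ => by positivity)
      (Finset.mem_univ j)
    nlinarith [norm_nonneg (V i j), sq_nonneg (‖x i‖ - ‖y j‖)]
  have hexpand : ‖star x ⬝ᵥ V *ᵥ y‖ ≤ ∑ i, ∑ j, ‖x i‖ * ‖V i j‖ * ‖y j‖ := by
    simp only [dotProduct, mulVec, Finset.mul_sum]
    refine (norm_sum_le _ _).trans (Finset.sum_le_sum fun i _ => (norm_sum_le _ _).trans ?_)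
    simp [mul_assoc]
  rw [hform, hform, ← mul_add, Finset.sum_mul]
  calc 2 * ‖star x ⬝ᵥ V *ᵥ y‖ ≤ ∑ i, ∑ j, 2 * (‖x i‖ * ‖V i j‖ * ‖y j‖) := by
        simpa [Finset.mul_sum] using mul_le_mul_of_nonneg_left hexpand zero_le_two
    _ ≤ _ := Finset.sum_le_sum fun i _ => by
        rw [Finset.sum_mul]
        exact Finset.sum_le_sum fun j _ => hentry i j

theorem DominatedBy.mul_mul_conjTranspose {V T : Matrix n n ℂ} (h : DominatedBy V T)
    (A : Matrix m n ℂ) : DominatedBy (A * V * Aᴴ) (A * T * Aᴴ) := by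
  have hpull : ∀ (M : Matrix n n ℂ) (z w : m → ℂ),
      star z ⬝ᵥ (A * M * Aᴴ) *ᵥ w = star (Aᴴ *ᵥ z) ⬝ᵥ M *ᵥ (Aᴴ *ᵥ w) := by
    intro M z w
    rw [star_mulVec, conjTranspose_conjTranspose, ← dotProduct_mulVec, mulVec_mulVec,
      mulVec_mulVec]
  intro x y
  rw [hpull, hpull, hpull]
  exact h _ _

theorem DominatedBy.smul {V T : Matrix n n ℂ} (h : DominatedBy V T) {c : ℂ} (hc : ‖c‖ ≤ 1) :
    DominatedBy (c • V) T := by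
  intro x y
  rw [smul_mulVec, dotProduct_smul, smul_eq_mul, norm_mul]
  exact (mul_le_mul_of_nonneg_left (mul_le_of_le_one_left (norm_nonneg _) hc) zero_le_two).trans
    (h x y)

theorem DominatedBy.sum {ι : Type*} {s : Finset ι} {V T : ι → Matrix n n ℂ}
    (h : ∀ i ∈ s, DominatedBy (V i) (T i)) : DominatedBy (∑ i ∈ s, V i) (∑ i ∈ s, T i) := by
  intro x y
  simp only [sum_mulVec, dotProduct_sum, Complex.re_sum, ← Finset.sum_add_distrib]
  refine (mul_le_mul_of_nonneg_left (norm_sum_le _ _) zero_le_two).trans ?_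
  rw [Finset.mul_sum]
  exact Finset.sum_le_sum fun i hi => h i hi x y

theorem DominatedBy.conjSum {ι : Type*} [Fintype ι] {V T : Matrix n n ℂ} (h : DominatedBy V T)
    (A : ι → Matrix n n ℂ) : DominatedBy (conjSum A V) (conjSum A T) :=
  DominatedBy.sum fun i _ => h.mul_mul_conjTranspose (A i)

theorem eq_zero_of_dominatedBy_of_tendsto_zero [DecidableEq n] {V : Matrix n n ℂ}
    {T : ℕ → Matrix n n ℂ} (h : ∀ k, DominatedBy V (T k)) (hT : Tendsto T atTop (𝓝 0)) :
    V = 0 := by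
  ext i j
  have hle : ∀ k, 2 * ‖V i j‖ ≤ (T k i i).re + (T k j j).re := fun k => by
    simpa using h k (Pi.single i 1) (Pi.single j 1)
  have hdiag : ∀ l, Tendsto (fun k => (T k l l).re) atTop (𝓝 0) := fun l => by
    simpa [Function.comp_def] using
      (Complex.continuous_re.tendsto _).comp ((hT.apply_nhds l).apply_nhds l)
  have := ge_of_tendsto' ((hdiag i).add (hdiag j)) hle
  rw [add_zero] at this
  exact norm_le_zero_iff.mp (by linarith)

end Domination

theorem eq_zero_of_eq_sum_smul_conjSum {n : Type*} [Fintype n] [DecidableEq n] {β : Type*}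
    [Fintype β] {ι : β → Type*} [∀ b, Fintype (ι b)] (A : (b : β) → ι b → Matrix n n ℂ)
    {c : β → ℂ} (hc : ∀ b, ‖c b‖ ≤ 1)
    (hstable : ∀ T : Matrix n n ℂ, T.IsSymm →
      Tendsto (fun k => (fun T => ∑ b, conjSum (A b) T)^[k] T) atTop (𝓝 0))
    {V : Matrix n n ℂ} (hV : V = ∑ b, c b • conjSum (A b) V) : V = 0 := by
  set T₀ : Matrix n n ℂ := ((∑ i, ∑ j, ‖V i j‖ : ℝ) : ℂ) • 1
  refine eq_zero_of_dominatedBy_of_tendsto_zero (fun k => ?_) (hstable T₀ (isSymm_one.smul _))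
  induction k with
  | zero => exact dominatedBy_smul_one V
  | succ k ih =>
    rw [Function.iterate_succ_apply']
    nth_rewrite 1 [hV]
    exact DominatedBy.sum fun b _ => (ih.conjSum (A b)).smul (hc b)

section Companion

def IsBlockCompanion {R ι : Type*} [Zero R] [One R] [DecidableEq ι] {p : ℕ}
    (B : Fin p → Matrix ι ι R) (Bc : Matrix (Fin p × ι) (Fin p × ι) R) : Prop :=
  ∀ (a b : Fin p) (i j : ι), Bc (a, i) (b, j)
    = if (a : ℕ) = 0 then B b i j else if (a : ℕ) = (b : ℕ) + 1 then (if i = j then 1 else 0)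
      else 0

theorem IsBlockCompanion.map {R S ι : Type*} [Semiring R] [Semiring S] [DecidableEq ι] {p : ℕ}
    {B : Fin p → Matrix ι ι R} {Bc : Matrix (Fin p × ι) (Fin p × ι) R}
    (hBc : IsBlockCompanion B Bc) (f : R →+* S) :
    IsBlockCompanion (fun b => (B b).map f) (Bc.map f) := by
  intro a b i j
  simp only [map_apply, hBc a b i j]
  split_ifs <;> simp

variable {𝕜 ι : Type*} [Field 𝕜] [Fintype ι] [DecidableEq ι] {p : ℕ}
  {B : Fin p → Matrix ι ι 𝕜} {Bc : Matrix (Fin p × ι) (Fin p × ι) 𝕜}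

theorem companion_mulVec_apply_zero
    (hBc : IsBlockCompanion B Bc) (x : Fin p × ι → 𝕜) (hp : 0 < p) (i : ι) :
    (Bc *ᵥ x) (⟨0, hp⟩, i) = ∑ b, (B b *ᵥ fun j => x (b, j)) i := by
  simp [mulVec, dotProduct, Fintype.sum_prod_type, hBc _ _ i]

theorem companion_mulVec_apply_succ
    (hBc : IsBlockCompanion B Bc) (x : Fin p × ι → 𝕜) {a : ℕ} (ha : a + 1 < p) (i : ι) :
    (Bc *ᵥ x) (⟨a + 1, ha⟩, i) = x (⟨a, by omega⟩, i) := by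
  simp only [mulVec, dotProduct, Fintype.sum_prod_type, hBc _ _ i]
  rw [Finset.sum_eq_single ⟨a, by omega⟩]
  · simp
  · intro b _ hb
    have : a ≠ b := fun h => hb (Fin.ext h.symm)
    simp [this]
  · simp

theorem exists_eq_sum_inv_pow_smul_of_companion (hBc : IsBlockCompanion B Bc)
    {μ : 𝕜} (hμ : μ ≠ 0) {x : Fin p × ι → 𝕜} (hx0 : x ≠ 0) (hx : Bc *ᵥ x = μ • x) :
    ∃ v ≠ 0, v = ∑ b : Fin p, μ⁻¹ ^ ((b : ℕ) + 1) • (B b *ᵥ v) := by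
  obtain ⟨⟨a₀, i₀⟩, hxa₀⟩ := Function.ne_iff.mp hx0
  have hp : 0 < p := a₀.pos
  set v : ι → 𝕜 := fun i => x (⟨0, hp⟩, i)
  have hblock : ∀ (a : ℕ) (ha : a < p), (fun i => x (⟨a, ha⟩, i)) = μ⁻¹ ^ a • v := by
    intro a
    induction a with
    | zero => intro _; simp [v]
    | succ a ih =>
      intro ha
      funext i
      have hrow := congrFun hx (⟨a + 1, ha⟩, i)
      rw [companion_mulVec_apply_succ hBc, Pi.smul_apply, smul_eq_mul] at hrow
      rw [pow_succ', mul_smul, ← ih (by omega), Pi.smul_apply, smul_eq_mul, hrow,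
        inv_mul_cancel_left₀ hμ]
  refine ⟨v, fun hv => hxa₀ ?_, ?_⟩
  · simpa [hv] using congrFun (hblock a₀ a₀.2) i₀
  · funext i
    have hrow := congrFun hx (⟨0, hp⟩, i)
    rw [companion_mulVec_apply_zero hBc] at hrow
    simp only [fun b : Fin p => hblock b b.2, mulVec_smul, Pi.smul_apply, smul_eq_mul]
      at hrow
    have hshift : ∑ b : Fin p, μ⁻¹ ^ ((b : ℕ) + 1) * (B b *ᵥ v) i
        = μ⁻¹ * ∑ b : Fin p, μ⁻¹ ^ (b : ℕ) * (B b *ᵥ v) i := by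
      simp only [Finset.mul_sum, pow_succ', mul_assoc]
    simp only [Finset.sum_apply, Pi.smul_apply, smul_eq_mul, hshift, hrow,
      inv_mul_cancel_left₀ hμ]
    rfl

end Companion

end Matrix

theorem companion_spectral_radius_lt_one_general {d p : ℕ}
    (s : Fin p → ℕ)
    (Bbar : (j : Fin p) → Fin (s j) → Matrix (Fin d) (Fin d) ℝ)
    (H K : Matrix (VechIdx d) (Fin d × Fin d) ℝ)
    (hHK : ∀ D : Matrix (Fin d) (Fin d) ℝ, Dᵀ = D →
      matVech D = H.mulVec (matVec D) ∧ matVec D = Kᵀ.mulVec (matVech D))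
    (B : Fin p → Matrix (VechIdx d) (VechIdx d) ℝ)
    (hB : ∀ j, B j = H * (∑ r, Bbar j r ⊗ₖ Bbar j r) * Kᵀ)
    (Bc : Matrix (Fin p × VechIdx d) (Fin p × VechIdx d) ℝ)
    (hBc : ∀ (a b : Fin p) (i j : VechIdx d),
      Bc (a, i) (b, j)
        = if (a : ℕ) = 0 then B b i j
          else if (a : ℕ) = (b : ℕ) + 1 then (if i = j then 1 else 0) else 0)
    (hspec : ∀ μ ∈ spectrum ℂ ((∑ j, B j).map Complex.ofReal), ‖μ‖ < 1) :
    ∀ μ ∈ spectrum ℂ (Bc.map Complex.ofReal), ‖μ‖ < 1 := by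
  intro μ hμ
  by_contra! hμ1
  have hμ0 : μ ≠ 0 := norm_pos_iff.mp (one_pos.trans_le hμ1)
  obtain ⟨x, hx0, hx⟩ := exists_mulVec_eq_smul_of_mem_spectrum hμ
  obtain ⟨v, hv0, hv⟩ :=
    exists_eq_sum_inv_pow_smul_of_companion (IsBlockCompanion.map hBc ofRealHom) hμ0 hx0 hx
  set A : (b : Fin p) → Fin (s b) → Matrix (Fin d) (Fin d) ℂ := fun b r => (Bbar b r).map ofReal
  have hΦ : ∀ b V, V.IsSymm → (conjSum (A b) V).IsSymm := fun b V hV =>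
    hV.conjSum_map_ofReal (Bbar b)
  have hM : ∀ b V, V.IsSymm → (B b).map ofReal *ᵥ vech V = vech (conjSum (A b) V) :=
    fun b V hV => hB b ▸ map_ofReal_mulVec_vech_conjSum (fun D hD => (hHK D hD).1)
      (fun D hD => (hHK D hD).2) (Bbar b) hV
  have hpow : Tendsto (((∑ j, B j).map ofReal) ^ ·) atTop (𝓝 0) := by
    let _ := Matrix.linftyOpNormedRing (n := VechIdx d) (α := ℂ)
    let _ := Matrix.linftyOpNormedAlgebra (n := VechIdx d) (R := ℂ) (α := ℂ)
    exact tendsto_pow_atTop_nhds_zero_of_norm_spectrum_lt_one hspec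
  have hstable : ∀ T : Matrix (Fin d) (Fin d) ℂ, T.IsSymm →
      Tendsto (fun k => (fun T => ∑ b, conjSum (A b) T)^[k] T) atTop (𝓝 0) :=
    fun T hT => tendsto_iterate_nhds_zero_of_mulVec_vech
      (fun V hV => isSymm_sum fun b _ => hΦ b V hV)
      (fun V hV => map_ofReal_sum (M := B) _ ▸ sum_mulVec_vech _ hM hV) hpow hT
  have hc : ∀ b : Fin p, ‖μ⁻¹ ^ ((b : ℕ) + 1)‖ ≤ 1 := fun b => by
    rw [norm_pow, norm_inv]
    exact pow_le_one₀ (by positivity) (inv_le_one_of_one_le₀ hμ1)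
  have hV := eq_zero_of_eq_sum_smul_conjSum A hc hstable (ofVech_eq_sum_smul hΦ hM hv)
  exact hv0 (by rw [← vech_ofVech v, hV]; rfl)

/-- If the matrices `B_j = H (∑ᵣ B̄_{j,r} ⊗ B̄_{j,r}) Kᵀ` satisfy that the spectral
radius of `∑ B_j` is `< 1`, then the block companion matrix `B` (first block row
`(B_1 … B_p)`, identity blocks on the subdiagonal, zeros elsewhere) also has spectral
radius `< 1`. -/
theorem companion_spectral_radius_lt_one {d p : ℕ}
    (s : Fin p → ℕ)
    (Bbar : (j : Fin p) → Fin (s j) → Matrix (Fin d) (Fin d) ℝ)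
    (H K : Matrix (VechIdx d) (Fin d × Fin d) ℝ)
    (hHK : ∀ D : Matrix (Fin d) (Fin d) ℝ, Dᵀ = D →
      matVech D = H.mulVec (matVec D) ∧ matVec D = Kᵀ.mulVec (matVech D))
    (hI : H * Kᵀ = 1)
    (B : Fin p → Matrix (VechIdx d) (VechIdx d) ℝ)
    (hB : ∀ j, B j = H * (∑ r, Bbar j r ⊗ₖ Bbar j r) * Kᵀ)
    (Bc : Matrix (Fin p × VechIdx d) (Fin p × VechIdx d) ℝ)
    (hBc : ∀ (a b : Fin p) (i j : VechIdx d),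
      Bc (a, i) (b, j)
        = if (a : ℕ) = 0 then B b i j
          else if (a : ℕ) = (b : ℕ) + 1 then (if i = j then 1 else 0) else 0)
    (hspec : ∀ μ ∈ spectrum ℂ ((∑ j, B j).map Complex.ofReal), ‖μ‖ < 1) :
    ∀ μ ∈ spectrum ℂ (Bc.map Complex.ofReal), ‖μ‖ < 1 :=
  companion_spectral_radius_lt_one_general s Bbar H K hHK B hB Bc hBc hspec
end
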